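/- Let B be the set of hollow bistochastic n×n matrices, ε > 0, and π*(C) the minimizer over B of π ↦ ⟨C, π⟩ + (ε/2)‖π‖_F². If C' = C + u 1ⁿᵀ + 1ⁿ vᵀ + D + E with u, v ∈ ℝⁿ, D diagonal, and E an arbitrary n×n matrix, then ‖π*(C') − π*(C)‖_F ≤ (1/ε)‖E‖_F. -/

import Mathlib

open Finset

/-- The set of hollow bistochastic n×n matrices. -/
def hollowBistochastic (n : ℕ) : Set (Matrix (Fin n) (Fin n) ℝ) :=
  {π | (∀ i j, 0 ≤ π i j) ∧ (∀ i, ∑ j, π i j = 1) ∧ (∀ j, ∑ i, π i j = 1) ∧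
    ∀ i, π i i = 0}

/-!
Minimizing `⟨a, ρ⟩ + (ε/2)‖ρ‖²` over a convex set `K` amounts to projecting `-a/ε` onto `K`.
The first-order optimality condition `⟨a + ε x, y - x⟩ ≥ 0` at two minimizers, added up, gives
`ε‖x' - x‖² ≤ ⟨a - a', x' - x⟩`, whence `‖x' - x‖ ≤ ε⁻¹‖a' - a‖` by Cauchy–Schwarz.
On hollow bistochastic matrices the cost shift `u 1ᵀ + 1 vᵀ + D` only adds the constant
`∑ u + ∑ v` to the objective (row and column sums are one, the diagonal vanishes), so it does not
change the minimizer, and only `E` is left.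
-/

open scoped RealInnerProductSpace

section ConvexQuadratic

variable {E : Type*} [NormedAddCommGroup E] [InnerProductSpace ℝ E] {K : Set E} {a a' x x' y : E}
  {ε : ℝ}

theorem IsMinOn.inner_add_smul_sub_nonneg (hK : Convex ℝ K) (hx : x ∈ K) (hy : y ∈ K)
    (hmin : IsMinOn (fun ρ => ⟪a, ρ⟫ + ε / 2 * ‖ρ‖ ^ 2) K x) :
    0 ≤ ⟪a + ε • x, y - x⟫ := by
  have hderiv : HasFDerivWithinAt (fun ρ => ⟪a, ρ⟫ + ε / 2 * ‖ρ‖ ^ 2)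
      (innerSL ℝ a + (ε / 2) • (2 • innerSL ℝ x)) K x :=
    ((innerSL ℝ a).hasFDerivAt.add
      ((hasStrictFDerivAt_norm_sq x).hasFDerivAt.const_mul (ε / 2))).hasFDerivWithinAt
  have hfermat := hmin.localize.hasFDerivWithinAt_nonneg hderiv
    (sub_mem_posTangentConeAt_of_segment_subset (hK.segment_subset hx hy))
  convert hfermat using 1
  simp [inner_add_left, inner_smul_left]
  ring

theorem IsMinOn.norm_sub_le (hε : 0 < ε) (hK : Convex ℝ K) (hx : x ∈ K) (hx' : x' ∈ K)
    (hmin : IsMinOn (fun ρ => ⟪a, ρ⟫ + ε / 2 * ‖ρ‖ ^ 2) K x)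
    (hmin' : IsMinOn (fun ρ => ⟪a', ρ⟫ + ε / 2 * ‖ρ‖ ^ 2) K x') :
    ‖x' - x‖ ≤ ε⁻¹ * ‖a' - a‖ := by
  have hsum : ⟪a + ε • x, x' - x⟫ + ⟪a' + ε • x', x - x'⟫
      = -⟪a' - a, x' - x⟫ - ε * ‖x' - x‖ ^ 2 := by
    rw [← neg_sub x' x, inner_neg_right, ← real_inner_self_eq_norm_sq]
    simp only [inner_add_left, inner_sub_left, real_inner_smul_left]
    ring
  have hquad : ε * ‖x' - x‖ ^ 2 ≤ ‖a' - a‖ * ‖x' - x‖ := by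
    have hopt := add_nonneg (hmin.inner_add_smul_sub_nonneg hK hx hx')
      (hmin'.inner_add_smul_sub_nonneg hK hx' hx)
    have hcs := (neg_le_abs ⟪a' - a, x' - x⟫).trans (abs_real_inner_le_norm _ _)
    linarith
  rw [inv_mul_eq_div, le_div_iff₀ hε]
  rcases (norm_nonneg (x' - x)).eq_or_lt with h0 | hpos
  · rw [← h0, zero_mul]
    exact norm_nonneg _
  · nlinarith

end ConvexQuadratic

theorem IsMinOn.of_eq_add_const {α β : Type*} [AddCommGroup β] [PartialOrder β]
    [IsOrderedAddMonoid β] {f g : α → β} {S : Set α} {x : α} {c : β}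
    (hf : IsMinOn f S x) (hx : x ∈ S) (hfg : ∀ y ∈ S, f y = g y + c) : IsMinOn g S x :=
  fun y hy => by simpa [hfg x hx, hfg y hy] using hf hy

/-- Matrices with the Frobenius inner product, as a Euclidean space. -/
def Matrix.frobeniusEquiv (m n : Type*) : Matrix m n ℝ ≃ₗ[ℝ] EuclideanSpace ℝ (m × n) :=
  (Matrix.ofLinearEquiv ℝ).symm ≪≫ₗ (LinearEquiv.curry ℝ ℝ m n).symm ≪≫ₗ
    (WithLp.linearEquiv 2 ℝ (m × n → ℝ)).symm

theorem Matrix.frobeniusEquiv_apply {m n : Type*} (A : Matrix m n ℝ) (p : m × n) :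
    Matrix.frobeniusEquiv m n A p = A p.1 p.2 := rfl

section Frobenius

variable {m n : Type*} [Fintype m] [Fintype n]

theorem Matrix.inner_frobeniusEquiv (A B : Matrix m n ℝ) :
    ⟪Matrix.frobeniusEquiv m n A, Matrix.frobeniusEquiv m n B⟫ = ∑ i, ∑ j, A i j * B i j := by
  simp [PiLp.inner_apply, Matrix.frobeniusEquiv_apply, Fintype.sum_prod_type, mul_comm]

theorem Matrix.norm_frobeniusEquiv (A : Matrix m n ℝ) :
    ‖Matrix.frobeniusEquiv m n A‖ = √(∑ i, ∑ j, A i j ^ 2) := by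
  simp [EuclideanSpace.norm_eq, Matrix.frobeniusEquiv_apply, Fintype.sum_prod_type]

theorem Matrix.norm_frobeniusEquiv_sq (A : Matrix m n ℝ) :
    ‖Matrix.frobeniusEquiv m n A‖ ^ 2 = ∑ i, ∑ j, A i j ^ 2 := by
  simp [EuclideanSpace.norm_sq_eq, Matrix.frobeniusEquiv_apply, Fintype.sum_prod_type]

theorem Matrix.isMinOn_image_frobeniusEquiv {S : Set (Matrix m n ℝ)} {A π : Matrix m n ℝ}
    {ε : ℝ} (h : IsMinOn (fun ρ : Matrix m n ℝ =>
      (∑ i, ∑ j, A i j * ρ i j) + ε / 2 * ∑ i, ∑ j, ρ i j ^ 2) S π) :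
    IsMinOn (fun y => ⟪Matrix.frobeniusEquiv m n A, y⟫ + ε / 2 * ‖y‖ ^ 2)
      (Matrix.frobeniusEquiv m n '' S) (Matrix.frobeniusEquiv m n π) := by
  rintro _ ⟨ρ, hρ, rfl⟩
  simpa only [Set.mem_ofPred_eq, Matrix.inner_frobeniusEquiv, Matrix.norm_frobeniusEquiv_sq]
    using h hρ

end Frobenius

theorem convex_hollowBistochastic (n : ℕ) : Convex ℝ (hollowBistochastic n) := by
  rintro π ⟨hπ0, hπr, hπc, hπd⟩ ρ ⟨hρ0, hρr, hρc, hρd⟩ s t hs ht hst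
  refine ⟨fun i j => ?_, fun i => ?_, fun j => ?_, fun i => ?_⟩
  · simp only [Matrix.add_apply, Matrix.smul_apply, smul_eq_mul]
    have := hπ0 i j
    have := hρ0 i j
    positivity
  · simp [sum_add_distrib, ← mul_sum, hπr, hρr, hst]
  · simp [sum_add_distrib, ← mul_sum, hπc, hρc, hst]
  · simp [hπd, hρd]

theorem sum_sum_mul_shift_of_mem_hollowBistochastic {n : ℕ} {C D E ρ : Matrix (Fin n) (Fin n) ℝ}
    {u v : Fin n → ℝ} (hD : ∀ i j, i ≠ j → D i j = 0) (hρ : ρ ∈ hollowBistochastic n) :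
    ∑ i, ∑ j, (C i j + u i + v j + D i j + E i j) * ρ i j
      = ∑ i, ∑ j, (C + E) i j * ρ i j + (∑ i, u i + ∑ j, v j) := by
  obtain ⟨-, hρr, hρc, hρd⟩ := hρ
  have hu : ∑ i, ∑ j, u i * ρ i j = ∑ i, u i := by
    simp [← mul_sum, hρr]
  have hv : ∑ i, ∑ j, v j * ρ i j = ∑ j, v j := by
    rw [sum_comm]
    simp [← mul_sum, hρc]
  have hd : ∑ i, ∑ j, D i j * ρ i j = 0 := by
    refine sum_eq_zero fun i _ => sum_eq_zero fun j _ => ?_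
    rcases eq_or_ne i j with rfl | hij
    · rw [hρd i, mul_zero]
    · rw [hD i j hij, zero_mul]
  simp only [Matrix.add_apply, add_mul, sum_add_distrib, hu, hv, hd]
  ring

theorem quadratic_reg_stability_general (n : ℕ) (ε : ℝ) (hε : 0 < ε)
    (C C' D E : Matrix (Fin n) (Fin n) ℝ) (u v : Fin n → ℝ)
    (hD : ∀ i j, i ≠ j → D i j = 0)
    (hC' : ∀ i j, C' i j = C i j + u i + v j + D i j + E i j)
    (πC πC' : Matrix (Fin n) (Fin n) ℝ)
    (hπC : πC ∈ hollowBistochastic n) (hπC' : πC' ∈ hollowBistochastic n)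
    (hminC : IsMinOn (fun ρ : Matrix (Fin n) (Fin n) ℝ =>
        (∑ i, ∑ j, C i j * ρ i j) + ε / 2 * ∑ i, ∑ j, (ρ i j) ^ 2)
      (hollowBistochastic n) πC)
    (hminC' : IsMinOn (fun ρ : Matrix (Fin n) (Fin n) ℝ =>
        (∑ i, ∑ j, C' i j * ρ i j) + ε / 2 * ∑ i, ∑ j, (ρ i j) ^ 2)
      (hollowBistochastic n) πC') :
    Real.sqrt (∑ i, ∑ j, (πC' i j - πC i j) ^ 2) ≤
      (1 / ε) * Real.sqrt (∑ i, ∑ j, (E i j) ^ 2) := by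
  set T := Matrix.frobeniusEquiv (Fin n) (Fin n)
  have hminCE : IsMinOn (fun ρ : Matrix (Fin n) (Fin n) ℝ =>
      (∑ i, ∑ j, (C + E) i j * ρ i j) + ε / 2 * ∑ i, ∑ j, (ρ i j) ^ 2)
      (hollowBistochastic n) πC' :=
    hminC'.of_eq_add_const (c := ∑ i, u i + ∑ j, v j) hπC' fun ρ hρ => by
      simp only [hC', sum_sum_mul_shift_of_mem_hollowBistochastic hD hρ]
      ring
  have hK := (convex_hollowBistochastic n).linear_image T.toLinearMap
  have hstab := (Matrix.isMinOn_image_frobeniusEquiv hminC).norm_sub_le hε hK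
    (Set.mem_image_of_mem T hπC) (Set.mem_image_of_mem T hπC')
    (Matrix.isMinOn_image_frobeniusEquiv hminCE)
  rwa [← map_sub, ← map_sub, add_sub_cancel_left, Matrix.norm_frobeniusEquiv,
    Matrix.norm_frobeniusEquiv, ← one_div] at hstab

/-- if `C' = C + u 1ᵀ + 1 vᵀ + D + E` with `D` diagonal, then the regularised
self-transport minimizers for `C'` and `C` differ by at most `(1/ε)‖E‖_F` in Frobenius norm. -/
theorem quadratic_reg_stability (n : ℕ) (hn : 2 ≤ n) (ε : ℝ) (hε : 0 < ε)
    (C C' D E : Matrix (Fin n) (Fin n) ℝ) (u v : Fin n → ℝ)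
    (hD : ∀ i j, i ≠ j → D i j = 0)
    (hC' : ∀ i j, C' i j = C i j + u i + v j + D i j + E i j)
    (πC πC' : Matrix (Fin n) (Fin n) ℝ)
    (hπC : πC ∈ hollowBistochastic n) (hπC' : πC' ∈ hollowBistochastic n)
    (hminC : IsMinOn (fun ρ : Matrix (Fin n) (Fin n) ℝ =>
        (∑ i, ∑ j, C i j * ρ i j) + ε / 2 * ∑ i, ∑ j, (ρ i j) ^ 2)
      (hollowBistochastic n) πC)
    (hminC' : IsMinOn (fun ρ : Matrix (Fin n) (Fin n) ℝ =>
        (∑ i, ∑ j, C' i j * ρ i j) + ε / 2 * ∑ i, ∑ j, (ρ i j) ^ 2)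
      (hollowBistochastic n) πC') :
    Real.sqrt (∑ i, ∑ j, (πC' i j - πC i j) ^ 2) ≤
      (1 / ε) * Real.sqrt (∑ i, ∑ j, (E i j) ^ 2) :=
  quadratic_reg_stability_general n ε hε C C' D E u v hD hC' πC πC' hπC hπC' hminC hminC'
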